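/- For a memoryless (i.i.d.) source-side-information pair (X,Y) with finite alphabets, the conditional varentropy rate equals Var(-log₂ P(X_1|Y_1)), and this quantity is zero if and only if for every y ∈ 𝒴 with ℙ(Y_1 = y) > 0, the conditional distribution of X_1 given Y_1 = y is uniform on a subset 𝒳_y ⊆ 𝒳, where all subsets 𝒳_y have the same cardinality. -/

import Mathlib

open MeasureTheory ProbabilityTheory Filter Classical
open scoped Classical

/-!
By independence, the probabilities of the cylinder events `{X₁ⁿ = x₁ⁿ, Y₁ⁿ = y₁ⁿ}` and
`{Y₁ⁿ = y₁ⁿ}` factor over the coordinates, so almost surely the information density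
`-log₂ P(X₁ⁿ|Y₁ⁿ)` is the sum of the i.i.d. terms `-log₂ P(Xᵢ|Yᵢ)`, and its variance is exactly
`n` times the variance of one term. A bounded random variable has variance zero iff it is a.s.
constant; on a finite alphabet this means that `P(x|y) = r` on every atom of positive mass.
Since each conditional law sums to one, it is then uniform on a support of size `1/r`.
-/

namespace ProbabilityTheory

variable {Ω β : Type*} [MeasurableSpace Ω] [MeasurableSpace β] {μ : Measure Ω} {ν : Measure β}

lemma variance_eq_zero_iff_ae_eq_const [IsProbabilityMeasure μ] {X : Ω → ℝ} (hX : MemLp X 2 μ) :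
    Var[X; μ] = 0 ↔ ∃ c, X =ᵐ[μ] fun _ => c := by
  refine ⟨fun h => ⟨μ[X], ae_eq_integral_of_variance_eq_zero hX h⟩, ?_⟩
  rintro ⟨c, hc⟩
  simp [variance_congr hc, variance_eq_integral aemeasurable_const]

lemma iIndepFun.measure_forall_fin_mem_eq_prod {Z : ℕ → Ω → β} (hZ : ∀ i, Measurable (Z i))
    (hindep : iIndepFun Z μ) (hlaw : ∀ i, μ.map (Z i) = ν) (n : ℕ) {S : ℕ → Set β}
    (hS : ∀ i, MeasurableSet (S i)) :
    μ {ω | ∀ i : Fin n, Z i ω ∈ S i} = ∏ i ∈ Finset.range n, ν (S i) := by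
  have hset : {ω | ∀ i : Fin n, Z i ω ∈ S i} = ⋂ i ∈ Finset.range n, Z i ⁻¹' S i := by
    ext ω
    simp [Fin.forall_iff]
  rw [hset, hindep.measure_inter_preimage_eq_mul _ fun i _ => hS i]
  exact Finset.prod_congr rfl fun i _ => by rw [← hlaw i, Measure.map_apply (hZ i) (hS i)]

lemma iIndepFun.variance_sum_comp_eq_mul {Z : ℕ → Ω → β} (hZ : ∀ i, Measurable (Z i))
    (hindep : iIndepFun Z μ) (hlaw : ∀ i, μ.map (Z i) = ν) {f : β → ℝ} (hf : Measurable f)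
    (hf2 : MemLp f 2 ν) (n : ℕ) :
    Var[∑ i ∈ Finset.range n, f ∘ Z i; μ] = n * Var[f; ν] := by
  have hmem : ∀ i, MemLp (f ∘ Z i) 2 μ := fun i =>
    (memLp_map_measure_iff (hlaw i ▸ hf.aestronglyMeasurable) (hZ i).aemeasurable).mp
      (hlaw i ▸ hf2)
  rw [IndepFun.variance_sum (fun i _ => hmem i)
    fun i _ j _ hij => (hindep.indepFun hij).comp hf hf]
  have hvar : ∀ i, Var[f ∘ Z i; μ] = Var[f; ν] := fun i => by
    rw [← variance_map (hlaw i ▸ hf.aemeasurable) (hZ i).aemeasurable, hlaw i]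
  simp [hvar]

end ProbabilityTheory

lemma Fintype.exists_eq_ite_of_sum_eq_one {α : Type*} [Fintype α] {w : α → ℝ} {r : ℝ}
    (hsum : ∑ x, w x = 1) (hr : ∀ x, w x ≠ 0 → w x = r) :
    ∃ s : Finset α, (s.card : ℝ) * r = 1 ∧ ∀ x, w x = if x ∈ s then r else 0 := by
  refine ⟨Finset.univ.filter (w · ≠ 0), ?_, fun x => ?_⟩
  · rw [← hsum, ← Finset.sum_filter_ne_zero,
      Finset.sum_congr rfl fun x hx => hr x (by simpa using hx)]
    simp
  · by_cases hx : w x = 0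
    · simp [hx]
    · simp [hr x hx]

namespace MeasureTheory.Measure

variable {α β : Type*} [MeasurableSpace α] [MeasurableSpace β] (ν : Measure (α × β))

noncomputable def condProb (z : α × β) : ℝ := ν.real {z} / ν.real (Prod.snd ⁻¹' {z.2})

noncomputable def condInfo (z : α × β) : ℝ := -Real.logb 2 (ν.condProb z)

variable {ν} [IsFiniteMeasure ν]

lemma measureReal_preimage_snd_pos {z : α × β} (hz : ν {z} ≠ 0) :
    0 < ν.real (Prod.snd ⁻¹' {z.2}) :=
  (ENNReal.toReal_pos hz (measure_ne_top _ _)).trans_le (measureReal_mono (by simp))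

lemma condProb_ne_zero_iff (z : α × β) : ν.condProb z ≠ 0 ↔ ν {z} ≠ 0 := by
  refine ⟨fun h h0 => h (by simp [condProb, measureReal_def, h0]), fun hz => ?_⟩
  exact div_ne_zero ((measureReal_ne_zero_iff (measure_ne_top _ _)).mpr hz)
    (measureReal_preimage_snd_pos hz).ne'

lemma condProb_pos {z : α × β} (hz : ν {z} ≠ 0) : 0 < ν.condProb z :=
  lt_of_le_of_ne (div_nonneg measureReal_nonneg measureReal_nonneg)
    ((condProb_ne_zero_iff z).mpr hz).symm

variable [MeasurableSingletonClass α] [MeasurableSingletonClass β] [Fintype α]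

lemma measureReal_preimage_snd_eq_sum (y : β) :
    ν.real (Prod.snd ⁻¹' {y}) = ∑ x, ν.real {(x, y)} := by
  rw [← Set.univ_prod, ← Finset.coe_univ, ← Finset.coe_singleton, ← Finset.coe_product,
    ← sum_measureReal_singleton, Finset.sum_product,
    Finset.sum_congr rfl fun _ _ => Finset.sum_singleton _ _]

lemma sum_condProb_eq_one {y : β} (hy : 0 < ν.real (Prod.snd ⁻¹' {y})) :
    ∑ x, ν.condProb (x, y) = 1 := by
  simp only [condProb, ← Finset.sum_div, ← measureReal_preimage_snd_eq_sum, div_self hy.ne']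

lemma exists_const_condProb_iff :
    (∃ r, ∀ z, ν {z} ≠ 0 → ν.condProb z = r) ↔ ∃ m : ℕ, 0 < m ∧
      ∀ y, 0 < ν.real (Prod.snd ⁻¹' {y}) →
        ∃ s : Finset α, s.card = m ∧
          ∀ x, ν.condProb (x, y) = if x ∈ s then 1 / (m : ℝ) else 0 := by
  constructor
  · rintro ⟨r, hr⟩
    have key : ∀ y, 0 < ν.real (Prod.snd ⁻¹' {y}) → ∃ s : Finset α, (s.card : ℝ) * r = 1 ∧
        ∀ x, ν.condProb (x, y) = if x ∈ s then r else 0 := fun y hy =>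
      Fintype.exists_eq_ite_of_sum_eq_one (sum_condProb_eq_one hy)
        fun x hx => hr _ ((condProb_ne_zero_iff _).mp hx)
    by_cases hsupp : ∃ y, 0 < ν.real (Prod.snd ⁻¹' {y})
    · obtain ⟨y₀, hy₀⟩ := hsupp
      obtain ⟨s₀, hs₀, -⟩ := key y₀ hy₀
      refine ⟨s₀.card, Finset.card_pos.mpr ?_, fun y hy => ?_⟩
      · exact Finset.nonempty_iff_ne_empty.mpr fun h => by simp [h] at hs₀
      obtain ⟨s, hs, hw⟩ := key y hy
      have hr0 : r ≠ 0 := right_ne_zero_of_mul_eq_one hs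
      have hcard : s.card = s₀.card := by
        exact_mod_cast mul_right_cancel₀ hr0 (hs.trans hs₀.symm)
      refine ⟨s, hcard, fun x => ?_⟩
      rw [hw, ← hcard, eq_one_div_of_mul_eq_one_right hs]
    · exact ⟨1, one_pos, fun y hy => absurd ⟨y, hy⟩ hsupp⟩
  · rintro ⟨m, -, hm⟩
    refine ⟨1 / m, fun z hz => ?_⟩
    obtain ⟨s, -, hs⟩ := hm z.2 (measureReal_preimage_snd_pos hz)
    have hz' := hs z.1
    split_ifs at hz'
    · exact hz'
    · exact absurd hz' ((condProb_ne_zero_iff z).mpr hz)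

lemma variance_condInfo_eq_zero_iff [Finite β] [IsProbabilityMeasure ν] :
    Var[ν.condInfo; ν] = 0 ↔ ∃ r, ∀ z, ν {z} ≠ 0 → ν.condProb z = r := by
  rw [variance_eq_zero_iff_ae_eq_const MemLp.of_discrete]
  simp only [EventuallyEq, ae_iff_of_countable]
  constructor
  · rintro ⟨c, hc⟩
    refine ⟨2 ^ (-c), fun z hz => ((Real.logb_eq_iff_rpow_eq (by norm_num) (by norm_num)
      (condProb_pos hz)).mp ?_).symm⟩
    rw [← hc z hz, condInfo, neg_neg]
  · rintro ⟨r, hr⟩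
    exact ⟨-Real.logb 2 r, fun z hz => by rw [condInfo, hr z hz]⟩

end MeasureTheory.Measure

section InformationDensity

variable {Ω α β : Type*} [MeasurableSpace Ω] [MeasurableSpace α] [MeasurableSpace β]

noncomputable def condInfoDensity (μ : Measure Ω) (Z : ℕ → Ω → α × β) (n : ℕ) (ω : Ω) : ℝ :=
  -Real.logb 2 ((μ {ω' | ∀ i : Fin n, Z i ω' = Z i ω}).toReal /
    (μ {ω' | ∀ i : Fin n, (Z i ω').2 = (Z i ω).2}).toReal)

variable [MeasurableSingletonClass α] [MeasurableSingletonClass β] [Countable α] [Countable β]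
  {μ : Measure Ω} {ν : Measure (α × β)} [IsFiniteMeasure ν] {Z : ℕ → Ω → α × β}

lemma condInfoDensity_ae_eq_sum (hZ : ∀ i, Measurable (Z i)) (hindep : iIndepFun Z μ)
    (hlaw : ∀ i, μ.map (Z i) = ν) (n : ℕ) :
    condInfoDensity μ Z n =ᵐ[μ] ∑ i ∈ Finset.range n, ν.condInfo ∘ Z i := by
  have hsupp : ∀ᵐ ω ∂μ, ∀ i ∈ Finset.range n, ν {Z i ω} ≠ 0 := by
    refine (eventually_all_finset _).mpr fun i _ =>
      ae_of_ae_map (p := fun z => ν {z} ≠ 0) (hZ i).aemeasurable ?_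
    rw [hlaw i]
    exact ae_iff_of_countable.mpr fun _ => id
  filter_upwards [hsupp] with ω hω
  have hnum := hindep.measure_forall_fin_mem_eq_prod hZ hlaw n (S := fun i => {Z i ω})
    fun _ => measurableSet_singleton _
  have hden := hindep.measure_forall_fin_mem_eq_prod hZ hlaw n
    (S := fun i => Prod.snd ⁻¹' {(Z i ω).2}) fun _ => measurable_snd (measurableSet_singleton _)
  simp only [Set.mem_singleton_iff, Set.mem_preimage] at hnum hden
  rw [condInfoDensity, hnum, hden, ENNReal.toReal_prod, ENNReal.toReal_prod,
    ← Finset.prod_div_distrib]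
  change -Real.logb 2 (∏ i ∈ _, ν.condProb (Z i ω)) = _
  rw [Real.logb_prod _ _ fun i hi => (Measure.condProb_ne_zero_iff _).mpr (hω i hi)]
  simp [Measure.condInfo]

end InformationDensity

/-- For a memoryless (i.i.d.) source-side-information pair on finite
alphabets, the conditional varentropy rate `lim (1/n) Var(-log₂ P(X₁ⁿ|Y₁ⁿ))`
equals `Var(-log₂ P(X₁|Y₁))`, and it is zero iff for every `y` with positive
probability the conditional distribution of `X₁` given `Y₁ = y` is uniform on a
subset `𝒳_y ⊆ 𝒳`, with all the subsets `𝒳_y` of the same cardinality. -/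
theorem stmt15 {Ω 𝒳 𝒴 : Type*} [MeasurableSpace Ω]
    [Fintype 𝒳] [Fintype 𝒴] [MeasurableSpace 𝒳] [MeasurableSingletonClass 𝒳]
    [MeasurableSpace 𝒴] [MeasurableSingletonClass 𝒴]
    (μ : Measure Ω) [IsProbabilityMeasure μ]
    (X : ℕ → Ω → 𝒳) (Y : ℕ → Ω → 𝒴)
    (hX : ∀ i, Measurable (X i)) (hY : ∀ i, Measurable (Y i))
    -- the pairs (Xᵢ, Yᵢ) are i.i.d.:
    (hindep : iIndepFun (fun i ω => (X i ω, Y i ω)) μ)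
    (hident : ∀ i, Measure.map (fun ω => (X i ω, Y i ω)) μ =
      Measure.map (fun ω => (X 0 ω, Y 0 ω)) μ)
    -- the conditional information density -log₂ P(X₁ⁿ|Y₁ⁿ):
    (ι : ℕ → Ω → ℝ)
    (hι : ∀ n ω, ι n ω = -Real.logb 2
      ((μ {ω' | ∀ i : Fin n, X i ω' = X i ω ∧ Y i ω' = Y i ω}).toReal /
        (μ {ω' | ∀ i : Fin n, Y i ω' = Y i ω}).toReal)) :
    Tendsto (fun n : ℕ => variance (ι n) μ / n) atTop (nhds (variance (ι 1) μ)) ∧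
    (variance (ι 1) μ = 0 ↔ ∃ m : ℕ, 0 < m ∧
      ∀ y : 𝒴, 0 < (μ {ω | Y 0 ω = y}).toReal →
        ∃ s : Finset 𝒳, s.card = m ∧ ∀ x : 𝒳,
          (μ {ω | X 0 ω = x ∧ Y 0 ω = y}).toReal / (μ {ω | Y 0 ω = y}).toReal =
            if x ∈ s then 1 / (m : ℝ) else 0) := by
  set Z : ℕ → Ω → 𝒳 × 𝒴 := fun i ω => (X i ω, Y i ω)
  have hZ : ∀ i, Measurable (Z i) := fun i => (hX i).prodMk (hY i)
  set ν := μ.map (Z 0)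
  have : IsProbabilityMeasure ν := Measure.isProbabilityMeasure_map (hZ 0).aemeasurable
  have hι' : ι = condInfoDensity μ Z := by
    funext n ω
    simp only [hι, condInfoDensity, Z, Prod.mk.injEq]
  have hvar : ∀ n : ℕ, Var[ι n; μ] = n * Var[ν.condInfo; ν] := fun n => by
    rw [hι', variance_congr (condInfoDensity_ae_eq_sum hZ hindep hident n),
      hindep.variance_sum_comp_eq_mul hZ hident (measurable_of_finite _) MemLp.of_discrete]
  have hvar₁ : Var[ι 1; μ] = Var[ν.condInfo; ν] := by simpa using hvar 1
  have hq : ∀ y, (μ {ω | Y 0 ω = y}).toReal = ν.real (Prod.snd ⁻¹' {y}) := fun y => by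
    rw [measureReal_def, Measure.map_apply (hZ 0) (measurable_snd (measurableSet_singleton y))]
    rfl
  have hp : ∀ x y, (μ {ω | X 0 ω = x ∧ Y 0 ω = y}).toReal = ν.real {(x, y)} := fun x y => by
    rw [measureReal_def, Measure.map_apply (hZ 0) (measurableSet_singleton _)]
    congr 2
    ext ω
    simp [Z]
  refine ⟨tendsto_const_nhds.congr' ?_, ?_⟩
  · filter_upwards [eventually_ne_atTop 0] with n hn
    rw [hvar n, hvar₁]
    field_simp
  · rw [hvar₁, Measure.variance_condInfo_eq_zero_iff, Measure.exists_const_condProb_iff]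
    simp only [hp, hq, Measure.condProb]
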